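/- Let {ξ_j : j ∈ ℤ} be identically distributed, α ∈ (0,1], r ∈ (0,1] with r < α, and suppose E(ξ₁²1{|ξ₁|≤x}) is regularly varying with index 2−α, b_n → ∞ with limsup_n n b_n^{−2}E(ξ₁²1{|ξ₁|≤b_n}) < ∞, and Σ_{k∈ℤ}|a_k|^r < ∞. Then for every δ > 0 and T > 0, limsup_{n→∞} P(max_{1≤l≤[nT]} |b_n^{−1} Σ_{j=1}^l Σ_{|k|>m} a_k ξ_{j−k} 1{|ξ_{j−k}| > b_n}| > δ) ≤ C_3 · Σ_{|k|>m} |a_k|^r for a constant C_3 independent of m. -/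

import Mathlib

/-!
Since `r ≤ 1`, `|∑ xᵢ| ^ r ≤ ∑ |xᵢ| ^ r`, so on the event in question
`∑_{j ≤ ⌊nT⌋} ∑_{|k| > m} |a_k| ^ r |ξ_{j-k}| ^ r 1{|ξ_{j-k}| > b_n}` exceeds `(δ b_n) ^ r`, and
Markov's inequality bounds the probability by
`nT · (∑_{|k| > m} |a_k| ^ r) · E(|ξ₁| ^ r 1{|ξ₁| > b_n}) / (δ b_n) ^ r`.
The truncated second moment `V(x) = E(ξ₁² 1{|ξ₁| ≤ x})` is regularly varying of index `2 - α`, so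
eventually `V(2x) ≤ K V(x)` for some `K` with `2 ^ (r - 2) K < 1`; splitting `{|ξ₁| > x}` into the
dyadic shells `{2ⁱ x < |ξ₁| ≤ 2ⁱ⁺¹ x}` then gives the Karamata-type bound
`E(|ξ₁| ^ r 1{|ξ₁| > x}) ≤ C x ^ (r - 2) V(x)`. Since `n b_n⁻² V(b_n)` is bounded, the probability
is `O(∑_{|k| > m} |a_k| ^ r)` uniformly in `m`.
-/

open MeasureTheory Filter Set ProbabilityTheory

/-- `L` is slowly varying at infinity. -/
def SlowlyVarying (L : ℝ → ℝ) : Prop :=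
  (∀ x > 0, 0 < L x) ∧ ∀ s > 0, Tendsto (fun x => L (s * x) / L x) atTop (nhds 1)

open scoped ENNReal

namespace ENNReal

theorem rpow_sum_le_sum_rpow {ι : Type*} (s : Finset ι) (f : ι → ℝ≥0∞) {p : ℝ} (hp0 : 0 < p)
    (hp1 : p ≤ 1) : (∑ i ∈ s, f i) ^ p ≤ ∑ i ∈ s, f i ^ p :=
  Finset.le_sum_of_subadditive (· ^ p) (by simp [hp0])
    (fun x y => rpow_add_le_add_rpow x y hp0.le hp1) s f

theorem rpow_tsum_le_tsum_rpow {ι : Type*} (f : ι → ℝ≥0∞) {p : ℝ} (hp0 : 0 < p) (hp1 : p ≤ 1) :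
    (∑' i, f i) ^ p ≤ ∑' i, f i ^ p := by
  rw [ENNReal.tsum_eq_iSup_sum, ← orderIsoRpow_apply p hp0, OrderIso.map_iSup]
  exact iSup_le fun s => (rpow_sum_le_sum_rpow s f hp0 hp1).trans (ENNReal.sum_le_tsum s)

end ENNReal

section RpowSubadditivity

variable {ι E : Type*} [NormedAddCommGroup E] {p : ℝ}

theorem enorm_sum_rpow_le (s : Finset ι) (f : ι → E) (hp0 : 0 < p) (hp1 : p ≤ 1) :
    ‖∑ i ∈ s, f i‖ₑ ^ p ≤ ∑ i ∈ s, ‖f i‖ₑ ^ p :=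
  (ENNReal.rpow_le_rpow (enorm_sum_le s f) hp0.le).trans
    (ENNReal.rpow_sum_le_sum_rpow s _ hp0 hp1)

theorem enorm_tsum_rpow_le (f : ι → E) (hp0 : 0 < p) (hp1 : p ≤ 1) :
    ‖∑' i, f i‖ₑ ^ p ≤ ∑' i, ‖f i‖ₑ ^ p :=
  (ENNReal.rpow_le_rpow enorm_tsum_le_tsum_enorm hp0.le).trans
    (ENNReal.rpow_tsum_le_tsum_rpow _ hp0 hp1)

end RpowSubadditivity

noncomputable def linearPartialSum {Ω ι : Type*} (a : ι → ℝ) (d : ι → ℤ) (η : ℤ → Ω → ℝ)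
    (l : ℕ) (ω : Ω) : ℝ :=
  ∑ j ∈ Finset.Icc 1 l, ∑' k, a k * η (j - d k) ω

section MaximalInequality

variable {Ω ι : Type*} {η : ℤ → Ω → ℝ} {a : ι → ℝ} {d : ι → ℤ} {r c δ : ℝ}

theorem ofReal_rpow_le_of_lt_abs_linearPartialSum (hr0 : 0 < r) (hr1 : r ≤ 1) (hc : 0 < c)
    {l L : ℕ} (hl : l ≤ L) {ω : Ω} (h : δ < |c⁻¹ * linearPartialSum a d η l ω|) :
    ENNReal.ofReal (δ * c) ^ r ≤
      ∑ j ∈ Finset.Icc 1 L, ∑' k, ‖a k‖ₑ ^ r * ‖η (j - d k) ω‖ₑ ^ r := by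
  have hδc : ENNReal.ofReal (δ * c) ≤ ‖linearPartialSum a d η l ω‖ₑ := by
    rw [abs_mul, abs_inv, abs_of_pos hc, inv_mul_eq_div, lt_div_iff₀ hc] at h
    rw [Real.enorm_eq_ofReal_abs]
    exact ENNReal.ofReal_le_ofReal h.le
  calc ENNReal.ofReal (δ * c) ^ r
      ≤ ‖linearPartialSum a d η l ω‖ₑ ^ r := ENNReal.rpow_le_rpow hδc hr0.le
    _ ≤ ∑ j ∈ Finset.Icc 1 l, ‖∑' k, a k * η (j - d k) ω‖ₑ ^ r :=
      enorm_sum_rpow_le _ _ hr0 hr1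
    _ ≤ ∑ j ∈ Finset.Icc 1 l, ∑' k, ‖a k * η (j - d k) ω‖ₑ ^ r :=
      Finset.sum_le_sum fun j _ => enorm_tsum_rpow_le _ hr0 hr1
    _ ≤ ∑ j ∈ Finset.Icc 1 L, ∑' k, ‖a k * η (j - d k) ω‖ₑ ^ r :=
      Finset.sum_le_sum_of_subset (Finset.Icc_subset_Icc le_rfl hl)
    _ = ∑ j ∈ Finset.Icc 1 L, ∑' k, ‖a k‖ₑ ^ r * ‖η (j - d k) ω‖ₑ ^ r := by
      simp only [enorm_mul, ENNReal.mul_rpow_of_nonneg _ _ hr0.le]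

variable [MeasurableSpace Ω] {μ : Measure Ω}

theorem lintegral_sum_tsum_enorm_rpow_le [Countable ι] (hη : ∀ i, AEMeasurable (η i) μ)
    {I : ℝ≥0∞} (hI : ∀ i, ∫⁻ ω, ‖η i ω‖ₑ ^ r ∂μ ≤ I) (L : ℕ) :
    ∫⁻ ω, ∑ j ∈ Finset.Icc 1 L, ∑' k, ‖a k‖ₑ ^ r * ‖η (j - d k) ω‖ₑ ^ r ∂μ ≤
      L * (∑' k, ‖a k‖ₑ ^ r) * I := by
  have hmeas : ∀ i, AEMeasurable (fun ω => ‖η i ω‖ₑ ^ r) μ := fun i => (hη i).enorm.pow_const r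
  rw [lintegral_finsetSum' _ fun j _ => AEMeasurable.tsum fun k =>
    (hmeas _).const_mul _]
  calc ∑ j ∈ Finset.Icc 1 L, ∫⁻ ω, ∑' k, ‖a k‖ₑ ^ r * ‖η (j - d k) ω‖ₑ ^ r ∂μ
      = ∑ j ∈ Finset.Icc 1 L, ∑' k, ‖a k‖ₑ ^ r * ∫⁻ ω, ‖η (j - d k) ω‖ₑ ^ r ∂μ := by
        simp only [lintegral_tsum fun k => (hmeas _).const_mul _,
          lintegral_const_mul'' _ (hmeas _)]
    _ ≤ ∑ j ∈ Finset.Icc 1 L, ∑' k, ‖a k‖ₑ ^ r * I := by gcongr; exact hI _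
    _ = L * (∑' k, ‖a k‖ₑ ^ r) * I := by simp [ENNReal.tsum_mul_right, mul_assoc]

theorem measure_exists_abs_linearPartialSum_gt_le [Countable ι] (hη : ∀ i, AEMeasurable (η i) μ)
    (hr0 : 0 < r) (hr1 : r ≤ 1) {I : ℝ≥0∞} (hI : ∀ i, ∫⁻ ω, ‖η i ω‖ₑ ^ r ∂μ ≤ I)
    (hc : 0 < c) (hδ : 0 < δ) (L : ℕ) :
    μ {ω | ∃ l, 1 ≤ l ∧ l ≤ L ∧ δ < |c⁻¹ * linearPartialSum a d η l ω|} ≤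
      L * (∑' k, ‖a k‖ₑ ^ r) * I / ENNReal.ofReal (δ * c) ^ r := by
  have hY : AEMeasurable
      (fun ω => ∑ j ∈ Finset.Icc 1 L, ∑' k, ‖a k‖ₑ ^ r * ‖η (j - d k) ω‖ₑ ^ r) μ :=
    Finset.aemeasurable_fun_sum _ fun j _ => AEMeasurable.tsum fun k =>
      ((hη _).enorm.pow_const r).const_mul _
  have hsub : {ω | ∃ l, 1 ≤ l ∧ l ≤ L ∧ δ < |c⁻¹ * linearPartialSum a d η l ω|} ⊆
      {ω | ENNReal.ofReal (δ * c) ^ r ≤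
        ∑ j ∈ Finset.Icc 1 L, ∑' k, ‖a k‖ₑ ^ r * ‖η (j - d k) ω‖ₑ ^ r} :=
    fun ω ⟨l, _, hl, h⟩ => ofReal_rpow_le_of_lt_abs_linearPartialSum hr0 hr1 hc hl h
  refine (measure_mono hsub).trans ?_
  refine (meas_ge_le_lintegral_div hY ?_ ?_).trans ?_
  · exact (ENNReal.rpow_pos (by simp [mul_pos hδ hc]) ENNReal.ofReal_ne_top).ne'
  · exact ENNReal.rpow_ne_top_of_nonneg hr0.le ENNReal.ofReal_ne_top
  · gcongr
    exact lintegral_sum_tsum_enorm_rpow_le hη hI L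

theorem toReal_measure_exists_abs_linearPartialSum_gt_le [Countable ι]
    (hη : ∀ i, AEMeasurable (η i) μ) (hr0 : 0 < r) (hr1 : r ≤ 1)
    (ha : Summable fun k => |a k| ^ r) {I : ℝ} (hI0 : 0 ≤ I)
    (hI : ∀ i, ∫⁻ ω, ‖η i ω‖ₑ ^ r ∂μ ≤ ENNReal.ofReal I) (hc : 0 < c) (hδ : 0 < δ) (L : ℕ) :
    (μ {ω | ∃ l, 1 ≤ l ∧ l ≤ L ∧ δ < |c⁻¹ * linearPartialSum a d η l ω|}).toReal ≤
      L * (∑' k, |a k| ^ r) * I / (δ * c) ^ r := by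
  refine ENNReal.toReal_le_of_le_ofReal (by positivity)
    ((measure_exists_abs_linearPartialSum_gt_le hη hr0 hr1 hI hc hδ L).trans_eq ?_)
  have hδc : 0 < δ * c := mul_pos hδ hc
  have hS : 0 ≤ ∑' k, |a k| ^ r := tsum_nonneg fun k => by positivity
  rw [ENNReal.ofReal_div_of_pos (by positivity), ENNReal.ofReal_mul (mul_nonneg L.cast_nonneg hS),
    ENNReal.ofReal_mul L.cast_nonneg, ENNReal.ofReal_natCast,
    ENNReal.ofReal_tsum_of_nonneg (fun k => by positivity) ha,
    ← ENNReal.ofReal_rpow_of_nonneg hδc.le hr0.le]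
  simp only [Real.enorm_eq_ofReal_abs, ENNReal.ofReal_rpow_of_nonneg (abs_nonneg _) hr0.le]

end MaximalInequality

noncomputable def tailPart (x t : ℝ) : ℝ := if x < |t| then t else 0

theorem measurable_tailPart (x : ℝ) : Measurable (tailPart x) :=
  Measurable.ite (measurableSet_lt measurable_const measurable_abs) measurable_id measurable_const

noncomputable def truncSecondMoment {Ω : Type*} [MeasurableSpace Ω] (μ : Measure Ω) (f : Ω → ℝ)
    (x : ℝ) : ℝ :=
  ∫ ω, (if |f ω| ≤ x then f ω ^ 2 else 0) ∂μ

theorem truncSecondMoment_nonneg {Ω : Type*} [MeasurableSpace Ω] (μ : Measure Ω) (f : Ω → ℝ)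
    (x : ℝ) :
    0 ≤ truncSecondMoment μ f x :=
  integral_nonneg fun ω => by split_ifs <;> positivity

theorem exists_dyadic_abs_rpow_le {x t r : ℝ} (hx : 0 < x) (ht : x < |t|) (hr : r ≤ 2) :
    ∃ i : ℕ, |t| ≤ 2 ^ (i + 1) * x ∧ |t| ^ r ≤ (2 ^ i * x) ^ (r - 2) * t ^ 2 := by
  obtain ⟨i, hi, hi'⟩ := exists_nat_pow_near ((one_le_div hx).mpr ht.le) one_lt_two
  rw [le_div_iff₀ hx] at hi
  rw [div_lt_iff₀ hx] at hi'
  refine ⟨i, hi'.le, ?_⟩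
  calc |t| ^ r = |t| ^ (r - 2) * |t| ^ (2 : ℝ) := by
        rw [← Real.rpow_add (hx.trans ht)]; ring_nf
    _ ≤ (2 ^ i * x) ^ (r - 2) * |t| ^ (2 : ℝ) :=
        mul_le_mul_of_nonneg_right
          (Real.rpow_le_rpow_of_nonpos (by positivity) hi (by linarith)) (by positivity)
    _ = (2 ^ i * x) ^ (r - 2) * t ^ 2 := by rw [Real.rpow_two, sq_abs]

theorem enorm_tailPart_rpow_le_tsum {x r : ℝ} (hx : 0 < x) (hr0 : 0 < r) (hr2 : r ≤ 2) (t : ℝ) :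
    ‖tailPart x t‖ₑ ^ r ≤ ∑' i : ℕ, ENNReal.ofReal ((2 ^ i * x) ^ (r - 2)) *
      ENNReal.ofReal (if |t| ≤ 2 ^ (i + 1) * x then t ^ 2 else 0) := by
  unfold tailPart
  split_ifs with ht
  · obtain ⟨i, hti, hle⟩ := exists_dyadic_abs_rpow_le hx ht hr2
    refine le_trans ?_ (ENNReal.le_tsum i)
    rw [Real.enorm_eq_ofReal_abs, ENNReal.ofReal_rpow_of_nonneg (abs_nonneg _) hr0.le, if_pos hti,
      ← ENNReal.ofReal_mul (by positivity)]
    exact ENNReal.ofReal_le_ofReal hle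
  · simp [hr0]

theorem le_pow_mul_of_doubling {V : ℝ → ℝ} {K x₀ : ℝ} (hK : 0 ≤ K) (hx₀ : 0 ≤ x₀)
    (hV : ∀ x, x₀ ≤ x → V (2 * x) ≤ K * V x) {x : ℝ} (hx : x₀ ≤ x) (i : ℕ) :
    V (2 ^ i * x) ≤ K ^ i * V x := by
  induction i with
  | zero => simp
  | succ i ih =>
    have hx' : x₀ ≤ 2 ^ i * x :=
      hx.trans (le_mul_of_one_le_left (hx₀.trans hx) (one_le_pow₀ one_le_two))
    calc V (2 ^ (i + 1) * x) = V (2 * (2 ^ i * x)) := by ring_nf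
      _ ≤ K * V (2 ^ i * x) := hV _ hx'
      _ ≤ K * (K ^ i * V x) := by gcongr
      _ = K ^ (i + 1) * V x := by ring

theorem eventually_doubling_of_regularlyVarying {V ℓ : ℝ → ℝ} {ρ K : ℝ} (hℓ : SlowlyVarying ℓ)
    (hV : Tendsto (fun x => V x / (x ^ ρ * ℓ x)) atTop (nhds 1)) (hK : 2 ^ ρ < K) :
    ∀ᶠ x in atTop, V (2 * x) ≤ K * V x := by
  set g : ℝ → ℝ := fun x => V x / (x ^ ρ * ℓ x)
  have h2 : Tendsto (fun x : ℝ => 2 * x) atTop atTop := tendsto_id.const_mul_atTop two_pos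
  have hratio : Tendsto (fun x => g (2 * x) / g x * (2 ^ ρ * (ℓ (2 * x) / ℓ x))) atTop
      (nhds (2 ^ ρ)) := by
    simpa using ((hV.comp h2).div hV one_ne_zero).mul ((hℓ.2 2 two_pos).const_mul (2 ^ ρ))
  filter_upwards [hratio.eventually_lt_const hK, hV.eventually_const_lt one_pos,
    eventually_gt_atTop 0] with x hlt hg hx
  have hℓx : 0 < ℓ x := hℓ.1 x hx
  have hℓ2x : 0 < ℓ (2 * x) := hℓ.1 _ (by positivity)
  have hd : 0 < x ^ ρ * ℓ x := mul_pos (Real.rpow_pos_of_pos hx ρ) hℓx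
  have hVx : 0 < V x := by simpa [g, div_pos_iff_of_pos_right hd] using hg
  have hV2x : V (2 * x) = g (2 * x) / g x * (2 ^ ρ * (ℓ (2 * x) / ℓ x)) * V x := by
    simp only [g]
    have := Real.rpow_pos_of_pos hx ρ
    rw [Real.mul_rpow zero_le_two hx.le]
    field_simp
  rw [hV2x]
  exact mul_le_mul_of_nonneg_right hlt.le hVx.le

section TailMoment

variable {Ω : Type*} [MeasurableSpace Ω] {μ : Measure Ω} [IsFiniteMeasure μ] {f : Ω → ℝ} {r : ℝ}

theorem ofReal_truncSecondMoment (hf : AEMeasurable f μ) (x : ℝ) :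
    ENNReal.ofReal (truncSecondMoment μ f x) =
      ∫⁻ ω, ENNReal.ofReal (if |f ω| ≤ x then f ω ^ 2 else 0) ∂μ := by
  have hφ : Measurable fun t : ℝ => if |t| ≤ x then t ^ 2 else 0 :=
    Measurable.ite (measurableSet_le measurable_abs measurable_const) (measurable_id.pow_const 2)
      measurable_const
  refine ofReal_integral_eq_lintegral_ofReal ?_ (Eventually.of_forall fun ω => ?_)
  · refine Integrable.of_bound (hφ.comp_aemeasurable hf).aestronglyMeasurable (x ^ 2)
      (Eventually.of_forall fun ω => ?_)
    split_ifs with h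
    · rw [Real.norm_eq_abs, abs_sq, ← sq_abs]
      exact pow_le_pow_left₀ (abs_nonneg _) h 2
    · simp [sq_nonneg]
  · simp only [Pi.zero_apply]
    split_ifs <;> positivity

theorem lintegral_enorm_tailPart_rpow_le_of_doubling (hf : AEMeasurable f μ) (hr0 : 0 < r)
    (hr2 : r ≤ 2) {K x₀ : ℝ} (hK : 0 ≤ K) (hθ : 2 ^ (r - 2) * K < 1) (hx₀ : 0 < x₀)
    (hV : ∀ x, x₀ ≤ x → truncSecondMoment μ f (2 * x) ≤ K * truncSecondMoment μ f x)
    {x : ℝ} (hx : x₀ ≤ x) :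
    ∫⁻ ω, ‖tailPart x (f ω)‖ₑ ^ r ∂μ ≤
      ENNReal.ofReal (K * (1 - 2 ^ (r - 2) * K)⁻¹ * x ^ (r - 2) * truncSecondMoment μ f x) := by
  set θ : ℝ := 2 ^ (r - 2) * K
  set V := truncSecondMoment μ f
  have hx0 : 0 < x := hx₀.trans_le hx
  have hθ0 : 0 ≤ θ := by positivity
  have hV0 : 0 ≤ V x := truncSecondMoment_nonneg μ f x
  have hφ : ∀ i : ℕ, AEMeasurable
      (fun ω => ENNReal.ofReal (if |f ω| ≤ 2 ^ (i + 1) * x then f ω ^ 2 else 0)) μ := fun i =>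
    (Measurable.ite (measurableSet_le measurable_abs measurable_const)
      (measurable_id.pow_const 2) measurable_const).ennreal_ofReal.comp_aemeasurable hf
  have hterm : ∀ i : ℕ, (2 ^ i * x) ^ (r - 2) * V (2 ^ (i + 1) * x) ≤
      K * x ^ (r - 2) * V x * θ ^ i := fun i =>
    calc (2 ^ i * x) ^ (r - 2) * V (2 ^ (i + 1) * x)
        ≤ (2 ^ i * x) ^ (r - 2) * (K ^ (i + 1) * V x) := by
          gcongr
          exact le_pow_mul_of_doubling hK hx₀.le hV hx (i + 1)
      _ = K * x ^ (r - 2) * V x * θ ^ i := by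
          rw [Real.mul_rpow (by positivity) hx0.le, ← Real.rpow_pow_comm zero_le_two]
          ring
  calc ∫⁻ ω, ‖tailPart x (f ω)‖ₑ ^ r ∂μ
      ≤ ∫⁻ ω, ∑' i : ℕ, ENNReal.ofReal ((2 ^ i * x) ^ (r - 2)) *
          ENNReal.ofReal (if |f ω| ≤ 2 ^ (i + 1) * x then f ω ^ 2 else 0) ∂μ :=
        lintegral_mono fun ω => enorm_tailPart_rpow_le_tsum hx0 hr0 hr2 (f ω)
    _ = ∑' i : ℕ, ENNReal.ofReal ((2 ^ i * x) ^ (r - 2) * V (2 ^ (i + 1) * x)) := by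
        rw [lintegral_tsum fun i => (hφ i).const_mul _]
        congr 1 with i
        rw [lintegral_const_mul'' _ (hφ i), ← ofReal_truncSecondMoment hf,
          ENNReal.ofReal_mul (by positivity)]
    _ ≤ ∑' i : ℕ, ENNReal.ofReal (K * x ^ (r - 2) * V x * θ ^ i) :=
        ENNReal.tsum_le_tsum fun i => ENNReal.ofReal_le_ofReal (hterm i)
    _ = ENNReal.ofReal (K * (1 - θ)⁻¹ * x ^ (r - 2) * V x) := by
        rw [← ENNReal.ofReal_tsum_of_nonneg (fun i => by positivity)
          ((summable_geometric_of_lt_one hθ0 hθ).mul_left _), tsum_mul_left,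
          tsum_geometric_of_lt_one hθ0 hθ]
        ring_nf

theorem exists_lintegral_enorm_tailPart_rpow_le (hf : AEMeasurable f μ) {ℓ : ℝ → ℝ}
    (hℓ : SlowlyVarying ℓ) {α : ℝ} (hr0 : 0 < r) (hr2 : r ≤ 2) (hrα : r < α)
    (hreg : Tendsto (fun x => truncSecondMoment μ f x / (x ^ (2 - α) * ℓ x)) atTop (nhds 1)) :
    ∃ C x₀, 0 ≤ C ∧ 0 < x₀ ∧ ∀ x, x₀ ≤ x →
      ∫⁻ ω, ‖tailPart x (f ω)‖ₑ ^ r ∂μ ≤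
        ENNReal.ofReal (C * x ^ (r - 2) * truncSecondMoment μ f x) := by
  -- any doubling constant `K` strictly between `2 ^ (2 - α)` and `2 ^ (2 - r)` works
  set K : ℝ := 2 ^ (2 - (r + α) / 2)
  have hK : (2 : ℝ) ^ (2 - α) < K := Real.rpow_lt_rpow_of_exponent_lt one_lt_two (by linarith)
  have hθ : 2 ^ (r - 2) * K < 1 := by
    rw [← Real.rpow_add two_pos]
    exact Real.rpow_lt_one_of_one_lt_of_neg one_lt_two (by linarith)
  obtain ⟨x₀, hx₀⟩ := eventually_atTop.1 (eventually_doubling_of_regularlyVarying hℓ hreg hK)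
  have hθ' : 0 < 1 - 2 ^ (r - 2) * K := by linarith
  exact ⟨_, max x₀ 1, by positivity, by positivity, fun x hx =>
    lintegral_enorm_tailPart_rpow_le_of_doubling hf hr0 hr2 (by positivity) hθ (by positivity)
      (fun y hy => hx₀ y ((le_max_left _ _).trans hy)) hx⟩

end TailMoment

theorem tail_part_negligible_alpha_le_one_general
    {Ω : Type*} [MeasurableSpace Ω] (μ : Measure Ω) [IsProbabilityMeasure μ]
    (ξ : ℤ → Ω → ℝ)
    (hid : ∀ j : ℤ, IdentDistrib (ξ j) (ξ 1) μ μ)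
    (α : ℝ) (r : ℝ) (hr : r ∈ Set.Ioc (0:ℝ) 1) (hrα : r < α)
    (ℓ : ℝ → ℝ) (hℓ : SlowlyVarying ℓ)
    (hreg : Tendsto
      (fun x => (∫ ω, (if |ξ 1 ω| ≤ x then (ξ 1 ω) ^ 2 else 0) ∂μ) / (x ^ (2 - α) * ℓ x))
      atTop (nhds 1))
    (b : ℕ → ℝ) (hb : Tendsto b atTop atTop)
    (hbound : IsBoundedUnder (· ≤ ·) atTop
      (fun n : ℕ => (n : ℝ) * (b n) ^ (-(2:ℝ)) *
        ∫ ω, (if |ξ 1 ω| ≤ b n then (ξ 1 ω) ^ 2 else 0) ∂μ))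
    (a : ℤ → ℝ) (ha : Summable (fun k : ℤ => |a k| ^ r)) :
    ∀ δ : ℝ, 0 < δ → ∀ T : ℝ, 0 < T → ∃ C : ℝ, ∀ m : ℕ,
      Filter.limsup (fun n : ℕ =>
        (μ {ω | ∃ l, 1 ≤ l ∧ l ≤ ⌊(n : ℝ) * T⌋₊ ∧
          δ < |(b n)⁻¹ * ∑ j ∈ Finset.Icc 1 l, ∑' k : {k : ℤ // (m : ℤ) < |k|},
            a k * (if b n < |ξ ((j : ℤ) - k) ω| then ξ ((j : ℤ) - k) ω else 0)|}).toReal)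
        atTop ≤ C * ∑' k : {k : ℤ // (m : ℤ) < |k|}, |a k| ^ r := by
  intro δ hδ T hT
  obtain ⟨C, x₀, hC, hx₀, htail⟩ := exists_lintegral_enorm_tailPart_rpow_le
    (hid 1).aemeasurable_fst hℓ hr.1 (by linarith [hr.2]) hrα hreg
  obtain ⟨M, hM⟩ := hbound
  refine ⟨T * C * M / δ ^ r, fun m => limsup_le_of_le
    (isCoboundedUnder_le_of_le atTop fun _ => ENNReal.toReal_nonneg) ?_⟩
  filter_upwards [hb.eventually_ge_atTop x₀, hM] with n hbn hMn
  set V := truncSecondMoment μ (ξ 1) (b n)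
  set S := ∑' k : {k : ℤ // (m : ℤ) < |k|}, |a k| ^ r
  have hb0 : 0 < b n := hx₀.trans_le hbn
  have hV0 : 0 ≤ V := truncSecondMoment_nonneg μ (ξ 1) (b n)
  have hI : ∀ i, ∫⁻ ω, ‖tailPart (b n) (ξ i ω)‖ₑ ^ r ∂μ ≤
      ENNReal.ofReal (C * b n ^ (r - 2) * V) := fun i =>
    ((hid i).comp ((measurable_tailPart (b n)).enorm.pow_const r)).lintegral_eq.trans_le
      (htail _ hbn)
  have hL : (⌊(n : ℝ) * T⌋₊ : ℝ) * (b n ^ (-2 : ℝ) * V) ≤ T * M := by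
    have hfloor : (⌊(n : ℝ) * T⌋₊ : ℝ) ≤ n * T := Nat.floor_le (by positivity)
    have : 0 ≤ b n ^ (-2 : ℝ) * V := by positivity
    nlinarith [show n * b n ^ (-2 : ℝ) * V ≤ M from hMn]
  calc _ ≤ ⌊(n : ℝ) * T⌋₊ * S * (C * b n ^ (r - 2) * V) / (δ * b n) ^ r :=
        toReal_measure_exists_abs_linearPartialSum_gt_le
          (η := fun i ω => tailPart (b n) (ξ i ω)) (d := Subtype.val)
          (fun i => (measurable_tailPart _).comp_aemeasurable (hid i).aemeasurable_fst)
          hr.1 hr.2 (ha.subtype _) (by positivity) hI hb0 hδ _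
    _ = C * S / δ ^ r * (⌊(n : ℝ) * T⌋₊ * (b n ^ (-2 : ℝ) * V)) := by
        rw [Real.mul_rpow hδ.le hb0.le, sub_eq_add_neg, Real.rpow_add hb0]
        field_simp
    _ ≤ C * S / δ ^ r * (T * M) := by gcongr
    _ = T * C * M / δ ^ r * S := by ring

/-- For identically distributed `ξ_j` with truncated second moment regularly varying of index
`2-α`, `α ∈ (0,1]`, `r ∈ (0,1]` with `r < α` and `Σ_k |a_k|^r < ∞`, the maximal tail-part
probabilities satisfy
`limsup_n P(max_{1≤l≤⌊nT⌋} |b_n^{-1} Σ_{j=1}^l Σ_{|k|>m} a_k ξ_{j-k} 1{|ξ_{j-k}|>b_n}| > δ)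
≤ C₃ Σ_{|k|>m}|a_k|^r` with `C₃` independent of `m`. -/
theorem tail_part_negligible_alpha_le_one
    {Ω : Type*} [MeasurableSpace Ω] (μ : Measure Ω) [IsProbabilityMeasure μ]
    (ξ : ℤ → Ω → ℝ) (hmeas : ∀ j, Measurable (ξ j))
    (hid : ∀ j : ℤ, IdentDistrib (ξ j) (ξ 1) μ μ)
    (α : ℝ) (hα : α ∈ Set.Ioc (0:ℝ) 1) (r : ℝ) (hr : r ∈ Set.Ioc (0:ℝ) 1) (hrα : r < α)
    (ℓ : ℝ → ℝ) (hℓ : SlowlyVarying ℓ)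
    (hreg : Tendsto
      (fun x => (∫ ω, (if |ξ 1 ω| ≤ x then (ξ 1 ω) ^ 2 else 0) ∂μ) / (x ^ (2 - α) * ℓ x))
      atTop (nhds 1))
    (b : ℕ → ℝ) (hbpos : ∀ n, 0 < b n) (hb : Tendsto b atTop atTop)
    (hbound : IsBoundedUnder (· ≤ ·) atTop
      (fun n : ℕ => (n : ℝ) * (b n) ^ (-(2:ℝ)) *
        ∫ ω, (if |ξ 1 ω| ≤ b n then (ξ 1 ω) ^ 2 else 0) ∂μ))
    (a : ℤ → ℝ) (ha : Summable (fun k : ℤ => |a k| ^ r)) :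
    ∀ δ : ℝ, 0 < δ → ∀ T : ℝ, 0 < T → ∃ C : ℝ, ∀ m : ℕ,
      Filter.limsup (fun n : ℕ =>
        (μ {ω | ∃ l, 1 ≤ l ∧ l ≤ ⌊(n : ℝ) * T⌋₊ ∧
          δ < |(b n)⁻¹ * ∑ j ∈ Finset.Icc 1 l, ∑' k : {k : ℤ // (m : ℤ) < |k|},
            a k * (if b n < |ξ ((j : ℤ) - k) ω| then ξ ((j : ℤ) - k) ω else 0)|}).toReal)
        atTop ≤ C * ∑' k : {k : ℤ // (m : ℤ) < |k|}, |a k| ^ r :=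
  tail_part_negligible_alpha_le_one_general μ ξ hid α r hr hrα ℓ hℓ hreg b hb hbound a ha
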